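/- arXiv:2009.07344 — 5 statements merged into one kernel-verified Lean document; each statement's English description precedes it below -/
import Mathlib

section
/- Let τ ⊆ ℤ×ℤ be a finite skew shape (i.e., for all u,w ∈ τ and v ∈ ℤ×ℤ, if u ≤ v ≤ w in the product order induced by (row increases southward, column increases eastward) then v ∈ τ). Then τ is cornered if and only if τ is connected. -/
open Finset

abbrev Node : Type := ℤ × ℤ

/-- `v` is weakly southeast of `u` (product order). -/
def SE (u v : Node) : Prop := u.1 ≤ v.1 ∧ u.2 ≤ v.2

/-- `v` is weakly northeast of `u` (`u ↗ v`). -/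
def NEr (u v : Node) : Prop := v.1 ≤ u.1 ∧ u.2 ≤ v.2

/-- `v` is strictly northeast of `u` (`u ⇗ v`). -/
def SNE (u v : Node) : Prop := v.1 < u.1 ∧ u.2 < v.2

def IsSkew (τ : Finset Node) : Prop :=
  ∀ u ∈ τ, ∀ w ∈ τ, ∀ v : Node, SE u v → SE v w → v ∈ τ

def Adj (u v : Node) : Prop :=
  v = u + (1, 0) ∨ v = u + (-1, 0) ∨ v = u + (0, 1) ∨ v = u + (0, -1)

def PathIn (τ : Finset Node) (u v : Node) : Prop :=
  Relation.ReflTransGen (fun a b => a ∈ τ ∧ b ∈ τ ∧ Adj a b) u v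

def IsConnectedShape (τ : Finset Node) : Prop :=
  ∀ u ∈ τ, ∀ v ∈ τ, PathIn τ u v

def Cornered (τ : Finset Node) : Prop :=
  (∀ u ∈ τ, ∀ u' ∈ τ, (u + (1, 0) ∉ τ ∧ u + (0, -1) ∉ τ) →
      (u' + (1, 0) ∉ τ ∧ u' + (0, -1) ∉ τ) → u = u') ∧
  (∀ v ∈ τ, ∀ v' ∈ τ, (v + (-1, 0) ∉ τ ∧ v + (0, 1) ∉ τ) →
      (v' + (-1, 0) ∉ τ ∧ v' + (0, 1) ∉ τ) → v = v')

def DiagConvex (τ : Finset Node) : Prop :=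
  ∀ u ∈ τ, ∀ w ∈ τ, ∀ v : Node,
    u.2 - u.1 = v.2 - v.1 → v.2 - v.1 = w.2 - w.1 → SE u v → SE v w → v ∈ τ

def Thin (τ : Finset Node) : Prop :=
  ∀ u ∈ τ, ∀ v ∈ τ, u.2 - u.1 = v.2 - v.1 → u = v

def IsRibbon (ξ : Finset Node) : Prop :=
  ξ.Nonempty ∧ IsSkew ξ ∧ IsConnectedShape ξ ∧ Thin ξ

def MaxSW (τ : Finset Node) (u : Node) : Prop :=
  u ∈ τ ∧ ∀ v ∈ τ, NEr v u → v = u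

def MaxNE (τ : Finset Node) (v : Node) : Prop :=
  v ∈ τ ∧ ∀ w ∈ τ, NEr v w → w = v

def IsNEPath (z : ℕ → Node) (k : ℕ) : Prop :=
  ∀ i, i + 1 < k → z (i + 1) = z i + (-1, 0) ∨ z (i + 1) = z i + (0, 1)

def IsSEPath (z : ℕ → Node) (k : ℕ) : Prop :=
  ∀ i, i + 1 < k → z (i + 1) = z i + (1, 0) ∨ z (i + 1) = z i + (0, 1)

def SERemovable (τ μ : Finset Node) : Prop :=
  μ ⊆ τ ∧ ∀ u ∈ μ, ∀ v ∈ τ \ μ, ¬ SE u v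

lemma adj_symm' {a b : Node} (h : Adj a b) : Adj b a := by
  rcases h with h | h | h | h <;> subst h <;>
    simp only [Adj, Prod.ext_iff, Prod.fst_add, Prod.snd_add] <;> omega

lemma pathIn_symm' {τ : Finset Node} {u v : Node} (h : PathIn τ u v) : PathIn τ v u := by
  induction h with
  | refl => exact Relation.ReflTransGen.refl
  | tail _ step ih =>
    exact Relation.ReflTransGen.head ⟨step.2.1, step.1, adj_symm' step.2.2⟩ ih

lemma sw_region {τ : Finset Node} (hτ : IsSkew τ) {u : Node} (hu : u ∈ τ)
    (h1 : u + (1, 0) ∉ τ) (h2 : u + (0, -1) ∉ τ) {x : Node} (hp : PathIn τ u x) :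
    x.1 ≤ u.1 ∧ u.2 ≤ x.2 := by
  have P1 : ∀ y ∈ τ, ¬(u.1 + 1 ≤ y.1 ∧ u.2 ≤ y.2) := by
    intro y hy hpy
    exact h1 (hτ u hu y hy (u + (1, 0))
      ⟨by simp, by simp⟩ ⟨by simpa using hpy.1, by simpa using hpy.2⟩)
  have P2 : ∀ y ∈ τ, ¬(y.1 ≤ u.1 ∧ y.2 ≤ u.2 - 1) := by
    intro y hy hpy
    exact h2 (hτ y hy u hu (u + (0, -1))
      ⟨by simpa using hpy.1, by have := hpy.2; simp only [Prod.snd_add]; omega⟩ ⟨by simp, by simp⟩)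
  induction hp with
  | refl => exact ⟨le_refl _, le_refl _⟩
  | tail _ step ih =>
    obtain ⟨hb, hc, hadj⟩ := step
    have h1' := P1 _ hc
    have h2' := P2 _ hc
    rcases hadj with h | h | h | h <;> subst h <;>
      simp only [Prod.fst_add, Prod.snd_add] at h1' h2' ⊢ <;> omega

lemma ne_region {τ : Finset Node} (hτ : IsSkew τ) {v : Node} (hv : v ∈ τ)
    (h1 : v + (-1, 0) ∉ τ) (h2 : v + (0, 1) ∉ τ) {x : Node} (hp : PathIn τ v x) :
    v.1 ≤ x.1 ∧ x.2 ≤ v.2 := by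
  have Q1 : ∀ y ∈ τ, ¬(y.1 ≤ v.1 - 1 ∧ y.2 ≤ v.2) := by
    intro y hy hpy
    exact h1 (hτ y hy v hv (v + (-1, 0))
      ⟨by have := hpy.1; simp only [Prod.fst_add]; omega, by simpa using hpy.2⟩ ⟨by simp, by simp⟩)
  have Q2 : ∀ y ∈ τ, ¬(v.1 ≤ y.1 ∧ v.2 + 1 ≤ y.2) := by
    intro y hy hpy
    exact h2 (hτ v hv y hy (v + (0, 1))
      ⟨by simp, by simp⟩ ⟨by simpa using hpy.1, by simpa using hpy.2⟩)
  induction hp with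
  | refl => exact ⟨le_refl _, le_refl _⟩
  | tail _ step ih =>
    obtain ⟨hb, hc, hadj⟩ := step
    have h1' := Q1 _ hc
    have h2' := Q2 _ hc
    rcases hadj with h | h | h | h <;> subst h <;>
      simp only [Prod.fst_add, Prod.snd_add] at h1' h2' ⊢ <;> omega

theorem stmt0 (τ : Finset Node) (hτ : IsSkew τ) :
    Cornered τ ↔ IsConnectedShape τ := by
  constructor
  · -- Cornered → Connected
    intro hcor
    rcases τ.eq_empty_or_nonempty with rfl | hne
    · intro u hu; simp at hu
    -- construct the SW corner u₀
    have hne1 : (τ.image Prod.fst).Nonempty := hne.image _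
    set r := (τ.image Prod.fst).max' hne1 with hr
    have hrmem : ∃ y ∈ τ, y.1 = r := by
      have := (τ.image Prod.fst).max'_mem hne1
      simpa using this
    obtain ⟨y₀, hy₀, hy₀r⟩ := hrmem
    set R := τ.filter (fun y => y.1 = r) with hR
    have hRne : R.Nonempty := ⟨y₀, by simp [hR, hy₀, hy₀r]⟩
    have hRne2 : (R.image Prod.snd).Nonempty := hRne.image _
    set c := (R.image Prod.snd).min' hRne2 with hc
    have hcmem : ∃ y ∈ R, y.2 = c := by
      have := (R.image Prod.snd).min'_mem hRne2
      simpa using this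
    obtain ⟨z₀, hz₀, hz₀c⟩ := hcmem
    have hz₀τ : z₀ ∈ τ := (Finset.mem_filter.mp hz₀).1
    have hz₀r : z₀.1 = r := (Finset.mem_filter.mp hz₀).2
    set u₀ : Node := (r, c) with hu₀def
    have hu₀ : u₀ ∈ τ := by
      have : z₀ = u₀ := Prod.ext hz₀r hz₀c
      rwa [← this]
    have h1 : u₀ + (1, 0) ∉ τ := by
      intro hmem
      have hle : (u₀ + (1, 0)).1 ≤ r := Finset.le_max' _ _ (Finset.mem_image_of_mem _ hmem)
      simp [hu₀def] at hle
    have h2 : u₀ + (0, -1) ∉ τ := by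
      intro hmem
      have hmemR : u₀ + (0, -1) ∈ R := by
        simp only [hR, Finset.mem_filter]
        exact ⟨hmem, by simp [hu₀def]⟩
      have hle : c ≤ (u₀ + (0, -1)).2 := Finset.min'_le _ _ (Finset.mem_image_of_mem _ hmemR)
      simp [hu₀def] at hle
    -- lower bound for the diagonal statistic
    have hneB : (τ.image (fun y : Node => y.2 - y.1)).Nonempty := hne.image _
    set B := (τ.image (fun y : Node => y.2 - y.1)).min' hneB with hB
    have hBle : ∀ x ∈ τ, B ≤ x.2 - x.1 := fun x hx =>
      Finset.min'_le _ _ (Finset.mem_image_of_mem _ hx)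
    -- every element has a path to u₀
    have key : ∀ k : ℕ, ∀ x ∈ τ, x.2 - x.1 - B ≤ (k : ℤ) → PathIn τ x u₀ := by
      intro k
      induction k with
      | zero =>
        intro x hx hle
        by_cases hx0 : x = u₀
        · subst hx0; exact Relation.ReflTransGen.refl
        · exfalso
          have hnc : ¬(x + (1, 0) ∉ τ ∧ x + (0, -1) ∉ τ) := fun h =>
            hx0 (hcor.1 x hx u₀ hu₀ h ⟨h1, h2⟩)
          rcases not_and_or.mp hnc with h | h
          · have hy : x + (1, 0) ∈ τ := not_not.mp h
            have := hBle _ hy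
            have hx' := hBle _ hx
            simp only [Prod.fst_add, Prod.snd_add] at this
            omega
          · have hy : x + (0, -1) ∈ τ := not_not.mp h
            have := hBle _ hy
            simp only [Prod.fst_add, Prod.snd_add] at this
            omega
      | succ k ih =>
        intro x hx hle
        by_cases hx0 : x = u₀
        · subst hx0; exact Relation.ReflTransGen.refl
        · have hnc : ¬(x + (1, 0) ∉ τ ∧ x + (0, -1) ∉ τ) := fun h =>
            hx0 (hcor.1 x hx u₀ hu₀ h ⟨h1, h2⟩)
          rcases not_and_or.mp hnc with h | h
          · have hy : x + (1, 0) ∈ τ := not_not.mp h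
            have hd : (x + (1, 0)).2 - (x + (1, 0)).1 - B ≤ (k : ℤ) := by
              simp only [Prod.fst_add, Prod.snd_add]
              push_cast at hle ⊢
              omega
            exact Relation.ReflTransGen.head ⟨hx, hy, Or.inl rfl⟩ (ih _ hy hd)
          · have hy : x + (0, -1) ∈ τ := not_not.mp h
            have hd : (x + (0, -1)).2 - (x + (0, -1)).1 - B ≤ (k : ℤ) := by
              simp only [Prod.fst_add, Prod.snd_add]
              push_cast at hle ⊢
              omega
            exact Relation.ReflTransGen.head ⟨hx, hy, Or.inr (Or.inr (Or.inr rfl))⟩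
              (ih _ hy hd)
    intro u hu v hv
    have p1 : PathIn τ u u₀ :=
      key (u.2 - u.1 - B).toNat u hu (Int.self_le_toNat _)
    have p2 : PathIn τ v u₀ :=
      key (v.2 - v.1 - B).toNat v hv (Int.self_le_toNat _)
    exact p1.trans (pathIn_symm' p2)
  · -- Connected → Cornered
    intro hconn
    constructor
    · intro u hu u' hu' h h'
      have r1 := sw_region hτ hu h.1 h.2 (hconn u hu u' hu')
      have r2 := sw_region hτ hu' h'.1 h'.2 (hconn u' hu' u hu)
      exact Prod.ext (le_antisymm r2.1 r1.1) (le_antisymm r1.2 r2.2)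
    · intro v hv v' hv' h h'
      have r1 := ne_region hτ hv h.1 h.2 (hconn v hv v' hv')
      have r2 := ne_region hτ hv' h'.1 h'.2 (hconn v' hv' v hv)
      exact Prod.ext (le_antisymm r1.1 r2.1) (le_antisymm r2.2 r1.2)
end

section
/- A finite subset τ ⊆ ℤ×ℤ is a connected skew shape if and only if τ is cornered and diagonal-convex. -/
/-!
In a skew shape, every node reachable from a corner without southern and western neighbours
lies weakly north-east of it, so a connected skew shape has at most one such corner; negation,
the rotation by 180°, exchanges the two kinds of corners in `Cornered`.

Conversely, if there is only one such corner, a south/west walk from any node lowers the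
content by one per step and can only stop at that corner, so it reaches every content down to
the minimum and ends at the corner, which is therefore connected to every node and lies
south-west of all of them. Rotated, the same holds for the north-east corner and walks going
up. For `u ↘ v ↘ w` in the shape, walks from `u` and from `w` to the diagonal of `v` end
weakly north-west and south-east of `v`, and diagonal convexity puts `v` in the shape.
-/

open Finset

open Pointwise

-- The diagonal `D n` of the paper is the set of nodes of content `n`.
def content (p : Node) : ℤ := p.2 - p.1

lemma content_neg (p : Node) : content (-p) = -content p := by
  simp only [content, Prod.fst_neg, Prod.snd_neg]; ring

-- Rows grow southward: `u + (1, 0)` is the southern and `u + (0, -1)` the western neighbour.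
def IsSWCorner (τ : Finset Node) (u : Node) : Prop :=
  u ∈ τ ∧ u + (1, 0) ∉ τ ∧ u + (0, -1) ∉ τ

section

variable {τ : Finset Node}

lemma SE.neg {u v : Node} (h : SE u v) : SE (-v) (-u) := by
  simp only [SE, Prod.fst_neg, Prod.snd_neg] at h ⊢
  omega

lemma Adj.neg {a b : Node} (h : Adj a b) : Adj (-a) (-b) := by
  simp only [Adj, Prod.ext_iff, Prod.fst_add, Prod.snd_add, Prod.fst_neg, Prod.snd_neg] at h ⊢
  omega

lemma PathIn.neg {u v : Node} (h : PathIn τ u v) : PathIn (-τ) (-u) (-v) :=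
  Relation.ReflTransGen.lift (fun x => -x)
    (fun _ _ ⟨ha, hb, hadj⟩ => ⟨Finset.neg_mem_neg ha, Finset.neg_mem_neg hb, hadj.neg⟩)
    _ _ h

lemma PathIn.symm {u v : Node} (h : PathIn τ u v) : PathIn τ v u :=
  have : Std.Symm (fun a b : Node => a ∈ τ ∧ b ∈ τ ∧ Adj a b) :=
    ⟨fun _ _ ⟨ha, hb, hadj⟩ => ⟨hb, ha, by
      simp only [Adj, Prod.ext_iff, Prod.fst_add, Prod.snd_add] at hadj ⊢; omega⟩⟩
  Relation.ReflTransGen.stdSymm.symm _ _ h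

lemma IsSkew.neg (hs : IsSkew τ) : IsSkew (-τ) := by
  intro u hu w hw v huv hvw
  rw [Finset.mem_neg'] at hu hw ⊢
  exact hs (-w) hw (-u) hu (-v) hvw.neg huv.neg

lemma IsConnectedShape.neg (hc : IsConnectedShape τ) : IsConnectedShape (-τ) := by
  intro u hu v hv
  rw [Finset.mem_neg'] at hu hv
  simpa using (hc (-u) hu (-v) hv).neg

lemma isSWCorner_neg_iff {v : Node} :
    IsSWCorner (-τ) (-v) ↔ v ∈ τ ∧ v + (-1, 0) ∉ τ ∧ v + (0, 1) ∉ τ := by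
  simp [IsSWCorner, Finset.mem_neg', neg_add_rev, add_comm]

lemma cornered_iff :
    Cornered τ ↔
      {u | IsSWCorner τ u}.Subsingleton ∧ {u | IsSWCorner (-τ) u}.Subsingleton := by
  constructor
  · rintro ⟨hsw, hne⟩
    refine ⟨fun u hu u' hu' => hsw u hu.1 u' hu'.1 hu.2 hu'.2, fun u hu u' hu' => ?_⟩
    replace hu := isSWCorner_neg_iff.mp (show IsSWCorner (-τ) (-(-u)) by rwa [neg_neg])
    replace hu' := isSWCorner_neg_iff.mp (show IsSWCorner (-τ) (-(-u')) by rwa [neg_neg])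
    exact neg_inj.mp (hne _ hu.1 _ hu'.1 hu.2 hu'.2)
  · rintro ⟨hsw, hne⟩
    refine ⟨fun u hu u' hu' h h' => hsw ⟨hu, h⟩ ⟨hu', h'⟩, fun v hv v' hv' h h' => ?_⟩
    exact neg_inj.mp
      (hne (isSWCorner_neg_iff.mpr ⟨hv, h⟩) (isSWCorner_neg_iff.mpr ⟨hv', h'⟩))

lemma IsSkew.diagConvex (hs : IsSkew τ) : DiagConvex τ :=
  fun u hu w hw v _ _ => hs u hu w hw v

lemma IsSkew.nEr_of_adj (hs : IsSkew τ) {u b c : Node} (hu : IsSWCorner τ u) (hb : NEr u b)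
    (hc : c ∈ τ) (hbc : Adj b c) : NEr u c := by
  obtain ⟨hu, hS, hW⟩ := hu
  simp only [NEr] at hb ⊢
  rcases hbc with rfl | rfl | rfl | rfl <;>
    simp only [Prod.fst_add, Prod.snd_add] at hb ⊢
  · refine ⟨?_, by omega⟩
    by_contra h
    exact hS (hs u hu _ hc _ ⟨by simp, by simp⟩ ⟨by simp; omega, by simp; omega⟩)
  · omega
  · omega
  · refine ⟨by omega, ?_⟩
    by_contra h
    exact hW (hs _ hc u hu _ ⟨by simp; omega, by simp; omega⟩ ⟨by simp, by simp⟩)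

lemma IsSkew.nEr_of_pathIn (hs : IsSkew τ) {u p : Node} (hu : IsSWCorner τ u)
    (h : PathIn τ u p) : NEr u p := by
  induction h with
  | refl => exact ⟨le_rfl, le_rfl⟩
  | tail _ hstep ih => exact hs.nEr_of_adj hu ih hstep.2.1 hstep.2.2

lemma IsSkew.subsingleton_isSWCorner (hs : IsSkew τ) (hc : IsConnectedShape τ) :
    {u | IsSWCorner τ u}.Subsingleton := fun u hu u' hu' => by
  have h := hs.nEr_of_pathIn hu (hc u hu.1 u' hu'.1)
  have h' := hs.nEr_of_pathIn hu' (hc u' hu'.1 u hu.1)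
  simp only [NEr] at h h'
  ext <;> omega

lemma isSWCorner_of_forall_content_le {c : Node} (hc : c ∈ τ)
    (hmin : ∀ q ∈ τ, content c ≤ content q) : IsSWCorner τ c := by
  refine ⟨hc, fun h => ?_, fun h => ?_⟩ <;>
    · have := hmin _ h
      simp only [content, Prod.fst_add, Prod.snd_add] at this
      omega

lemma exists_isSWCorner (hne : τ.Nonempty) :
    ∃ c, IsSWCorner τ c ∧ ∀ q ∈ τ, content c ≤ content q :=
  let ⟨c, hc, hmin⟩ := τ.exists_min_image content hne
  ⟨c, isSWCorner_of_forall_content_le hc hmin, hmin⟩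

lemma exists_adj_content_pred {p : Node} (hp : p ∈ τ) (h : ¬ IsSWCorner τ p) :
    ∃ q ∈ τ, content q + 1 = content p ∧ NEr q p ∧ Adj p q := by
  simp only [IsSWCorner, hp, true_and, not_and_or, not_not] at h
  rcases h with h | h
  · exact ⟨_, h, by simp [content]; ring, by simp [NEr], Or.inl rfl⟩
  · exact ⟨_, h, by simp [content]; ring, by simp [NEr], Or.inr (Or.inr (Or.inr rfl))⟩

lemma exists_descent (hU : {u | IsSWCorner τ u}.Subsingleton) {p : Node} (hp : p ∈ τ) {d : ℤ}
    (hd : ∃ q ∈ τ, content q ≤ d) (hdp : d ≤ content p) :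
    ∃ t ∈ τ, content t = d ∧ NEr t p ∧ PathIn τ p t := by
  obtain ⟨c, hc, hmin⟩ := exists_isSWCorner ⟨p, hp⟩
  obtain ⟨q, hq, hqd⟩ := hd
  generalize hn : content p = n at hdp
  induction n, hdp using Int.leInduction generalizing p with
  | base => exact ⟨p, hp, hn, ⟨le_rfl, le_rfl⟩, .refl⟩
  | succ n hdn ih =>
    have hpc : ¬ IsSWCorner τ p := fun hpc => by
      have := hmin q hq
      rw [← hU hpc hc] at this
      omega
    obtain ⟨r, hr, hrp, hnr, hadj⟩ := exists_adj_content_pred hp hpc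
    obtain ⟨t, ht, htd, hnt, hpath⟩ := ih hr (by omega)
    refine ⟨t, ht, htd, ?_, .head ⟨hp, hr, hadj⟩ hpath⟩
    simp only [NEr] at hnr hnt ⊢
    omega

lemma nEr_and_pathIn_of_isSWCorner (hU : {u | IsSWCorner τ u}.Subsingleton) {c p : Node}
    (hc : IsSWCorner τ c) (hp : p ∈ τ) : NEr c p ∧ PathIn τ p c := by
  obtain ⟨c', hc', hmin⟩ := exists_isSWCorner ⟨p, hp⟩
  obtain ⟨t, ht, htc, hnt, hpath⟩ := exists_descent hU hp ⟨c', hc'.1, le_rfl⟩ (hmin p hp)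
  have htc' : t = c := hU (isSWCorner_of_forall_content_le ht (htc ▸ hmin)) hc
  exact htc' ▸ ⟨hnt, hpath⟩

lemma isConnectedShape_of_subsingleton_isSWCorner (hU : {u | IsSWCorner τ u}.Subsingleton) :
    IsConnectedShape τ := fun u hu v hv => by
  obtain ⟨c, hc, -⟩ := exists_isSWCorner ⟨u, hu⟩
  exact (nEr_and_pathIn_of_isSWCorner hU hc hu).2.trans
    (nEr_and_pathIn_of_isSWCorner hU hc hv).2.symm

lemma exists_ascent (hU : {u | IsSWCorner (-τ) u}.Subsingleton) {p : Node} (hp : p ∈ τ)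
    {d : ℤ} (hd : ∃ q ∈ τ, d ≤ content q) (hpd : content p ≤ d) :
    ∃ t ∈ τ, content t = d ∧ NEr p t := by
  obtain ⟨q, hq, hdq⟩ := hd
  obtain ⟨t, ht, htd, hnt, -⟩ := exists_descent (d := -d) hU (Finset.neg_mem_neg hp)
    ⟨-q, Finset.neg_mem_neg hq, by simpa [content_neg]⟩ (by simpa [content_neg])
  refine ⟨-t, Finset.mem_neg'.mp ht, by simp [content_neg, htd], ?_⟩
  simp only [NEr, Prod.fst_neg, Prod.snd_neg] at hnt ⊢
  omega

lemma exists_content_eq_comparable (hU : {u | IsSWCorner τ u}.Subsingleton)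
    (hU' : {u | IsSWCorner (-τ) u}.Subsingleton) {p : Node} (hp : p ∈ τ) {d : ℤ}
    (hlo : ∃ q ∈ τ, content q ≤ d) (hhi : ∃ q ∈ τ, d ≤ content q) :
    ∃ t ∈ τ, content t = d ∧ (NEr t p ∨ NEr p t) := by
  rcases le_total d (content p) with hdp | hpd
  · obtain ⟨t, ht, htd, hnt, -⟩ := exists_descent hU hp hlo hdp
    exact ⟨t, ht, htd, .inl hnt⟩
  · obtain ⟨t, ht, htd, hnt⟩ := exists_ascent hU' hp hhi hpd
    exact ⟨t, ht, htd, .inr hnt⟩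

lemma exists_content_le_of_sE (hU : {u | IsSWCorner τ u}.Subsingleton) {u v w : Node}
    (hu : u ∈ τ) (hw : w ∈ τ) (huv : SE u v) (hvw : SE v w) :
    ∃ q ∈ τ, content q ≤ content v := by
  obtain ⟨c, hc, -⟩ := exists_isSWCorner ⟨u, hu⟩
  have hcu := (nEr_and_pathIn_of_isSWCorner hU hc hu).1
  have hcw := (nEr_and_pathIn_of_isSWCorner hU hc hw).1
  refine ⟨c, hc.1, ?_⟩
  simp only [NEr, SE, content] at hcu hcw huv hvw ⊢
  omega

lemma isSkew_of_diagConvex (hU : {u | IsSWCorner τ u}.Subsingleton)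
    (hU' : {u | IsSWCorner (-τ) u}.Subsingleton) (hD : DiagConvex τ) : IsSkew τ := by
  intro u hu w hw v huv hvw
  have hlo := exists_content_le_of_sE hU hu hw huv hvw
  have hhi : ∃ q ∈ τ, content v ≤ content q := by
    obtain ⟨q, hq, hqv⟩ := exists_content_le_of_sE hU'
      (Finset.neg_mem_neg hw) (Finset.neg_mem_neg hu) hvw.neg huv.neg
    exact ⟨-q, Finset.mem_neg'.mp hq, by rw [content_neg] at hqv ⊢; omega⟩
  obtain ⟨t, ht, htv, hut⟩ := exists_content_eq_comparable hU hU' hu hlo hhi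
  obtain ⟨s, hs, hsv, hws⟩ := exists_content_eq_comparable hU hU' hw hlo hhi
  refine hD t ht s hs v htv hsv.symm ?_ ?_ <;>
    simp only [NEr, SE, content] at htv hsv hut hws huv hvw ⊢ <;> omega

end

theorem stmt1 (τ : Finset Node) :
    (IsSkew τ ∧ IsConnectedShape τ) ↔ (Cornered τ ∧ DiagConvex τ) := by
  rw [cornered_iff]
  constructor
  · rintro ⟨hs, hc⟩
    exact ⟨⟨hs.subsingleton_isSWCorner hc, hs.neg.subsingleton_isSWCorner hc.neg⟩,
      hs.diagConvex⟩
  · rintro ⟨⟨hU, hU'⟩, hD⟩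
    exact ⟨isSkew_of_diagConvex hU hU' hD, isConnectedShape_of_subsingleton_isSWCorner hU⟩
end

section
/- Let τ be a nonempty finite subset of ℤ×ℤ, and for u, v ∈ ℤ×ℤ write u ⇗ v if v = u + (-a,b) for some a, b > 0. Then τ is a skew shape if and only if there exist k ≥ 1 and nonempty connected skew shapes τ_1, ..., τ_k with τ = τ_1 ⊔ ... ⊔ τ_k such that for all i < j we have u' ⇗ v' for all u' ∈ τ_j and v' ∈ τ_i. -/
open Finset

section AuxStmt4

open scoped Classical

lemma adj_symm4 {u v : Node} (h : Adj u v) : Adj v u := by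
  have e1 : (u.1 : ℤ) = u.1 := rfl
  rcases h with h | h | h | h <;>
    [ (right; left); (left); (right; right; right); (right; right; left) ] <;>
    (subst h; apply Prod.ext <;> simp)

lemma pathIn_symm4 {σ : Finset Node} {u v : Node} (h : PathIn σ u v) : PathIn σ v u := by
  refine @Std.Symm.symm _ _ (@Relation.ReflTransGen.stdSymm _ _ ⟨?_⟩) _ _ h
  rintro a b ⟨ha, hb, hadj⟩
  exact ⟨hb, ha, adj_symm4 hadj⟩

lemma pathIn_of_SE4 {τ : Finset Node} (hsk : IsSkew τ) :
    ∀ n : ℕ, ∀ a b : Node, a ∈ τ → b ∈ τ → SE a b →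
      ((b.1 - a.1) + (b.2 - a.2)).toNat = n → PathIn τ a b := by
  intro n
  induction n with
  | zero =>
    intro a b ha hb hse hn
    obtain ⟨h1, h2⟩ := hse
    have : a = b := by
      apply Prod.ext <;> omega
    subst this; exact Relation.ReflTransGen.refl
  | succ n ih =>
    intro a b ha hb hse hn
    obtain ⟨h1, h2⟩ := hse
    by_cases hlt : a.1 < b.1
    · set a' : Node := (a.1 + 1, a.2) with ha'
      have ha'τ : a' ∈ τ := hsk a ha b hb a' ⟨by simp [ha'], by simp [ha']⟩ ⟨by simp [ha']; omega, by simpa [ha'] using h2⟩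
      have hadj : Adj a a' := by left; apply Prod.ext <;> simp [ha']
      have : PathIn τ a' b := ih a' b ha'τ hb ⟨by simp [ha']; omega, by simpa [ha'] using h2⟩ (by simp [ha']; omega)
      exact Relation.ReflTransGen.head ⟨ha, ha'τ, hadj⟩ this
    · have h1' : a.1 = b.1 := by omega
      have h2' : a.2 < b.2 := by omega
      set a' : Node := (a.1, a.2 + 1) with ha'
      have ha'τ : a' ∈ τ := hsk a ha b hb a' ⟨by simp [ha'], by simp [ha']⟩ ⟨by simp [ha']; omega, by simp [ha']; omega⟩
      have hadj : Adj a a' := by right; right; left; apply Prod.ext <;> simp [ha']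
      have : PathIn τ a' b := ih a' b ha'τ hb ⟨by simp [ha']; omega, by simp [ha']; omega⟩ (by simp [ha']; omega)
      exact Relation.ReflTransGen.head ⟨ha, ha'τ, hadj⟩ this

lemma pathIn_of_SE4' {τ : Finset Node} (hsk : IsSkew τ) {a b : Node}
    (ha : a ∈ τ) (hb : b ∈ τ) (hse : SE a b) : PathIn τ a b :=
  pathIn_of_SE4 hsk _ a b ha hb hse rfl

lemma dichotomy4 {τ : Finset Node} (hsk : IsSkew τ) {a b : Node}
    (ha : a ∈ τ) (hb : b ∈ τ) (hnp : ¬ PathIn τ a b) : SNE a b ∨ SNE b a := by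
  have : SE a b ∨ SE b a ∨ SNE a b ∨ SNE b a := by
    simp only [SE, SNE]; omega
  rcases this with h | h | h | h
  · exact absurd (pathIn_of_SE4' hsk ha hb h) hnp
  · exact absurd (pathIn_symm4 (pathIn_of_SE4' hsk hb ha h)) hnp
  · exact Or.inl h
  · exact Or.inr h

lemma coh1 {τ : Finset Node} (hsk : IsSkew τ) {a a' b : Node}
    (hp : PathIn τ a a') (hb : b ∈ τ) (hnp : ¬ PathIn τ a b) (h : SNE a b) : SNE a' b := by
  induction hp with
  | refl => exact h
  | @tail c d hp' hstep ih =>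
    obtain ⟨hc, hd, hadj⟩ := hstep
    have hnp' : ¬ PathIn τ d b := fun hx => hnp ((hp'.tail ⟨hc, hd, hadj⟩).trans hx)
    rcases dichotomy4 hsk hd hb hnp' with h2 | h2
    · exact h2
    · exfalso
      have ihc := ih
      rcases hadj with he | he | he | he <;>
        (rw [Prod.ext_iff] at he; simp only [Prod.fst_add, Prod.snd_add] at he;
         simp only [SNE] at ihc h2; omega)

lemma coh2 {τ : Finset Node} (hsk : IsSkew τ) {a b b' : Node}
    (hp : PathIn τ b b') (ha : a ∈ τ) (hnp : ¬ PathIn τ a b) (h : SNE a b) : SNE a b' := by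
  induction hp with
  | refl => exact h
  | @tail c d hp' hstep ih =>
    obtain ⟨hc, hd, hadj⟩ := hstep
    have hnp' : ¬ PathIn τ a d := fun hx => hnp (hx.trans (pathIn_symm4 (hp'.tail ⟨hc, hd, hadj⟩)))
    rcases dichotomy4 hsk ha hd hnp' with h2 | h2
    · exact h2
    · exfalso
      rcases hadj with he | he | he | he <;>
        (rw [Prod.ext_iff] at he; simp only [Prod.fst_add, Prod.snd_add] at he;
         simp only [SNE] at ih h2; omega)

noncomputable def comp4 (τ : Finset Node) (u : Node) : Finset Node :=
  τ.filter (fun v => PathIn τ u v)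

noncomputable def key4 (τ : Finset Node) (u : Node) : ℤ :=
  WithTop.untopD 0 (((comp4 τ u).image Prod.snd).min)

lemma mem_comp4 {τ : Finset Node} {u v : Node} :
    v ∈ comp4 τ u ↔ v ∈ τ ∧ PathIn τ u v := by simp [comp4]

lemma comp4_nonempty {τ : Finset Node} {u : Node} (hu : u ∈ τ) : (comp4 τ u).Nonempty :=
  ⟨u, mem_comp4.mpr ⟨hu, Relation.ReflTransGen.refl⟩⟩

lemma key4_spec {τ : Finset Node} {u : Node} (hu : u ∈ τ) :
    (∃ w ∈ comp4 τ u, key4 τ u = w.2) ∧ ∀ w ∈ comp4 τ u, key4 τ u ≤ w.2 := by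
  have hne : ((comp4 τ u).image Prod.snd).Nonempty := (comp4_nonempty hu).image _
  have hmin : key4 τ u = ((comp4 τ u).image Prod.snd).min' hne := by
    rw [key4, ← Finset.coe_min' hne]; rfl
  constructor
  · have := Finset.min'_mem _ hne
    rw [Finset.mem_image] at this
    obtain ⟨w, hw, hw2⟩ := this
    exact ⟨w, hw, by rw [hmin, hw2]⟩
  · intro w hw
    rw [hmin]
    exact Finset.min'_le _ _ (Finset.mem_image_of_mem _ hw)

lemma comp4_eq {τ : Finset Node} {u v : Node} (hp : PathIn τ u v) : comp4 τ u = comp4 τ v := by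
  ext x
  simp only [mem_comp4]
  exact ⟨fun ⟨hx, hpx⟩ => ⟨hx, (pathIn_symm4 hp).trans hpx⟩, fun ⟨hx, hpx⟩ => ⟨hx, hp.trans hpx⟩⟩

lemma key4_eq_of_path {τ : Finset Node} {u v : Node} (hp : PathIn τ u v) : key4 τ u = key4 τ v := by
  rw [key4, key4, comp4_eq hp]

lemma key4_lt {τ : Finset Node} (hsk : IsSkew τ) {u v : Node}
    (hu : u ∈ τ) (hv : v ∈ τ) (hnp : ¬ PathIn τ u v) (hsne : SNE u v) :
    key4 τ u < key4 τ v := by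
  obtain ⟨⟨w, hw, hwk⟩, _⟩ := key4_spec hv
  obtain ⟨⟨x, hx, hxk⟩, _⟩ := key4_spec hu
  rw [mem_comp4] at hw hx
  have hnpx : ¬ PathIn τ x v := fun h => hnp ((hx.2).trans h)
  have h1 : SNE x v := coh1 hsk hx.2 hv hnp hsne
  have h2 : SNE x w := coh2 hsk hw.2 hx.1 hnpx h1
  rw [hwk, hxk]
  exact h2.2

lemma key4_eq_iff {τ : Finset Node} (hsk : IsSkew τ) {u v : Node}
    (hu : u ∈ τ) (hv : v ∈ τ) : key4 τ u = key4 τ v ↔ PathIn τ u v := by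
  constructor
  · intro h
    by_contra hnp
    rcases dichotomy4 hsk hu hv hnp with hs | hs
    · exact absurd h (ne_of_lt (key4_lt hsk hu hv hnp hs))
    · exact absurd h.symm (ne_of_lt (key4_lt hsk hv hu (fun hx => hnp (pathIn_symm4 hx)) hs))
  · exact key4_eq_of_path

lemma sne_of_key4_lt {τ : Finset Node} (hsk : IsSkew τ) {u v : Node}
    (hu : u ∈ τ) (hv : v ∈ τ) (h : key4 τ u < key4 τ v) : SNE u v := by
  have hnp : ¬ PathIn τ u v := fun hp => absurd (key4_eq_of_path hp) (ne_of_lt h)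
  rcases dichotomy4 hsk hu hv hnp with hs | hs
  · exact hs
  · exact absurd (key4_lt hsk hv hu (fun hx => hnp (pathIn_symm4 hx)) hs) (by omega)

lemma pathIn_restrict4 {τ : Finset Node} {u x : Node} (hu : u ∈ τ) (hp : PathIn τ u x) :
    PathIn (comp4 τ u) u x := by
  induction hp with
  | refl => exact Relation.ReflTransGen.refl
  | @tail c d hp' hstep ih =>
    obtain ⟨hc, hd, hadj⟩ := hstep
    exact ih.tail ⟨mem_comp4.mpr ⟨hc, hp'⟩, mem_comp4.mpr ⟨hd, hp'.tail ⟨hc, hd, hadj⟩⟩, hadj⟩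

lemma comp4_skew {τ : Finset Node} (hsk : IsSkew τ) {u : Node} (hu : u ∈ τ) :
    IsSkew (comp4 τ u) := by
  intro a ha c hc v h1 h2
  rw [mem_comp4] at ha hc ⊢
  have hv : v ∈ τ := hsk a ha.1 c hc.1 v h1 h2
  exact ⟨hv, ha.2.trans (pathIn_of_SE4' hsk ha.1 hv h1)⟩

lemma comp4_conn {τ : Finset Node} {u : Node} (hu : u ∈ τ) :
    IsConnectedShape (comp4 τ u) := by
  intro a ha b hb
  rw [mem_comp4] at ha hb
  have h1 : PathIn (comp4 τ u) u a := pathIn_restrict4 hu ha.2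
  have h2 : PathIn (comp4 τ u) u b := pathIn_restrict4 hu hb.2
  exact (pathIn_symm4 h1).trans h2

end AuxStmt4

theorem stmt4 (τ : Finset Node) (hne : τ.Nonempty) :
    IsSkew τ ↔
      ∃ k : ℕ, 1 ≤ k ∧ ∃ T : Fin k → Finset Node,
        (∀ i, (T i).Nonempty ∧ IsSkew (T i) ∧ IsConnectedShape (T i)) ∧
        (∀ i j, i ≠ j → Disjoint (T i) (T j)) ∧
        τ = Finset.univ.biUnion T ∧
        (∀ i j : Fin k, i < j → ∀ u ∈ T j, ∀ v ∈ T i, SNE u v) := by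
  classical
  constructor
  · intro hsk
    set M : Finset ℤ := τ.image (key4 τ) with hM
    have hMne : M.Nonempty := hne.image _
    set k : ℕ := M.card with hk
    have hk1 : 1 ≤ k := Finset.card_pos.mpr hMne
    set o : Fin k ≃o M := M.orderIsoOfFin rfl with ho
    refine ⟨k, hk1, fun i => τ.filter (fun x => key4 τ x = (o i.rev : ℤ)), ?_, ?_, ?_, ?_⟩
    · intro i
      have hmem : (o i.rev : ℤ) ∈ τ.image (key4 τ) := (o i.rev).2
      obtain ⟨w, hw, hwk⟩ := Finset.mem_image.mp hmem
      have hwT : w ∈ τ.filter (fun x => key4 τ x = (o i.rev : ℤ)) :=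
        Finset.mem_filter.mpr ⟨hw, hwk⟩
      have hfib : τ.filter (fun x => key4 τ x = (o i.rev : ℤ)) = comp4 τ w := by
        ext x
        simp only [Finset.mem_filter, mem_comp4]
        constructor
        · rintro ⟨hx, hxk⟩
          exact ⟨hx, pathIn_symm4 ((key4_eq_iff hsk hx hw).mp (hxk.trans hwk.symm))⟩
        · rintro ⟨hx, hpx⟩
          exact ⟨hx, (key4_eq_of_path (pathIn_symm4 hpx)).trans hwk⟩
      refine ⟨⟨w, hwT⟩, ?_, ?_⟩
      · show IsSkew (τ.filter (fun x => key4 τ x = (o i.rev : ℤ)))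
        rw [hfib]; exact comp4_skew hsk hw
      · show IsConnectedShape (τ.filter (fun x => key4 τ x = (o i.rev : ℤ)))
        rw [hfib]; exact comp4_conn hw
    · intro i j hij
      rw [Finset.disjoint_left]
      intro x hx hx'
      rw [Finset.mem_filter] at hx hx'
      have : (o i.rev : ℤ) = (o j.rev : ℤ) := hx.2.symm.trans hx'.2
      have : i.rev = j.rev := o.injective (Subtype.ext this)
      exact hij (Fin.rev_injective this)
    · ext x
      simp only [Finset.mem_biUnion, Finset.mem_univ, true_and, Finset.mem_filter]
      constructor
      · intro hx
        have hmem : key4 τ x ∈ M := Finset.mem_image_of_mem _ hx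
        refine ⟨(o.symm ⟨key4 τ x, hmem⟩).rev, hx, ?_⟩
        rw [Fin.rev_rev]
        have := o.apply_symm_apply ⟨key4 τ x, hmem⟩
        rw [this]
      · rintro ⟨i, hx, _⟩; exact hx
    · intro i j hij u hu v hv
      rw [Finset.mem_filter] at hu hv
      have hrev : j.rev < i.rev := by
        rw [Fin.rev_lt_rev]; exact hij
      have hlt : (o j.rev : ℤ) < (o i.rev : ℤ) := by
        have := o.strictMono hrev
        exact_mod_cast this
      exact sne_of_key4_lt hsk hu.1 hv.1 (by rw [hu.2, hv.2]; exact hlt)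
  · rintro ⟨k, hk, T, hprop, hdisj, heq, hord⟩
    intro u hu w hw v h1 h2
    have hmem : ∀ x ∈ τ, ∃ i, x ∈ T i := by
      intro x hx
      rw [heq] at hx
      simp only [Finset.mem_biUnion, Finset.mem_univ, true_and] at hx
      exact hx
    obtain ⟨i, hi⟩ := hmem u hu
    obtain ⟨j, hj⟩ := hmem w hw
    rcases lt_trichotomy i j with hij | hij | hij
    · have := hord i j hij w hj u hi
      simp only [SNE] at this
      simp only [SE] at h1 h2
      omega
    · subst hij
      have hv : v ∈ T i := (hprop i).2.1 u hi w hj v h1 h2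
      rw [heq]
      exact Finset.mem_biUnion.mpr ⟨i, Finset.mem_univ i, hv⟩
    · have := hord j i hij u hi w hj
      simp only [SNE] at this
      simp only [SE] at h1 h2
      omega
end

section
/- Let τ be a nonempty skew shape in ℤ×ℤ. Then τ has a unique maximally southwest node u, a unique maximally northeast node v, and u ↗ w ↗ v for every w ∈ τ. -/
open Finset

theorem stmt5 (τ : Finset Node) (hτ : IsSkew τ) (hne : τ.Nonempty) :
    ∃ u v : Node, MaxSW τ u ∧ MaxNE τ v ∧
      (∀ u', MaxSW τ u' → u' = u) ∧ (∀ v', MaxNE τ v' → v' = v) ∧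
      ∀ w ∈ τ, NEr u w ∧ NEr w v := by

  obtain ⟨a, haτ, ha⟩ := Finset.exists_max_image τ Prod.fst hne
  obtain ⟨b, hbτ, hb⟩ := Finset.exists_min_image τ Prod.snd hne
  obtain ⟨c, hcτ, hc⟩ := Finset.exists_min_image τ Prod.fst hne
  obtain ⟨d, hdτ, hd⟩ := Finset.exists_max_image τ Prod.snd hne
  have huτ : ((a.1, b.2) : Node) ∈ τ :=
    hτ b hbτ a haτ (a.1, b.2) ⟨ha b hbτ, le_refl _⟩ ⟨le_refl _, hb a haτ⟩
  have hvτ : ((c.1, d.2) : Node) ∈ τ :=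
    hτ c hcτ d hdτ (c.1, d.2) ⟨le_refl _, hd c hcτ⟩ ⟨hc d hdτ, le_refl _⟩
  have hu : ∀ w ∈ τ, NEr ((a.1, b.2) : Node) w := fun w hw => ⟨ha w hw, hb w hw⟩
  have hv : ∀ w ∈ τ, NEr w ((c.1, d.2) : Node) := fun w hw => ⟨hc w hw, hd w hw⟩
  have hmsw : MaxSW τ (a.1, b.2) := ⟨huτ, fun w hw ⟨h1, h2⟩ =>
    Prod.ext (le_antisymm (ha w hw) h1) (le_antisymm h2 (hb w hw))⟩
  have hmne : MaxNE τ (c.1, d.2) := ⟨hvτ, fun w hw ⟨h1, h2⟩ =>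
    Prod.ext (le_antisymm h1 (hc w hw)) (le_antisymm (hd w hw) h2)⟩
  exact ⟨(a.1, b.2), (c.1, d.2), hmsw, hmne,
    fun u' hu' => (hu'.2 _ huτ (hu u' hu'.1)).symm,
    fun v' hv' => (hv'.2 _ hvτ (hv v' hv'.1)).symm,
    fun w hw => ⟨hu w hw, hv w hw⟩⟩
end

section
/- Let ≽ be a convex preorder on the positive roots Φ_+ of type A^{(1)}_{e-1}, and let γ, β_1, ..., β_k ∈ Φ_+ with β_1 + ... + β_k = m·γ for some m ≥ 1. If β_1 ≽ β_2 ≽ ... ≽ β_k, then β_1 ≽ γ ≽ β_k; moreover if additionally β_1 ≻ β_k then β_1 ≻ γ ≻ β_k. -/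
open Finset

/-- Residue of a node, in `ZMod e`. -/
def res (e : ℕ) (u : Node) : ZMod e := ((u.2 - u.1 : ℤ) : ZMod e)

/-- Content of a finite set of nodes, as an element of the free module on `ZMod e`. -/
def cont (e : ℕ) (τ : Finset Node) : ZMod e → ℤ :=
  fun i => ((τ.filter (fun u => res e u = i)).card : ℤ)

/-- `α(t,h) = α_t + α_{t+1} + ⋯ + α_{t+h-1}` (indices mod `e`). -/
def alphaR (e : ℕ) (t : ZMod e) (h : ℕ) : ZMod e → ℤ :=
  fun i => (((Finset.range h).filter (fun j : ℕ => t + ((j : ℕ) : ZMod e) = i)).card : ℤ)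

def IsPosRoot (e : ℕ) (β : ZMod e → ℤ) : Prop :=
  ∃ t : ZMod e, ∃ h : ℕ, 1 ≤ h ∧ β = alphaR e t h

/-- The null root `δ = α_0 + ⋯ + α_{e-1}`. -/
def deltaR (e : ℕ) : ZMod e → ℤ := fun _ => 1

/-- Imaginary elements: positive multiples of `δ`. -/
def IsImag (e : ℕ) (β : ZMod e → ℤ) : Prop :=
  ∃ m : ℕ, 1 ≤ m ∧ β = fun _ => (m : ℤ)

/-- Indivisible positive roots `Ψ`: real positive roots together with `δ`. -/
def IsIndiv (e : ℕ) (β : ZMod e → ℤ) : Prop :=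
  (∃ t : ZMod e, ∃ h : ℕ, 1 ≤ h ∧ ¬ (e ∣ h) ∧ β = alphaR e t h) ∨ β = deltaR e

/-- A convex preorder on the positive roots. -/
def ConvexPreorder (e : ℕ) (R : (ZMod e → ℤ) → (ZMod e → ℤ) → Prop) : Prop :=
  (∀ β, IsPosRoot e β → R β β) ∧
  (∀ β γ ν, IsPosRoot e β → IsPosRoot e γ → IsPosRoot e ν →
      R β γ → R γ ν → R β ν) ∧
  (∀ β γ, IsPosRoot e β → IsPosRoot e γ → (R β γ ∨ R γ β)) ∧
  (∀ β γ, IsPosRoot e β → IsPosRoot e γ → R β γ → IsPosRoot e (β + γ) →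
      R β (β + γ) ∧ R (β + γ) γ) ∧
  (∀ β γ, IsPosRoot e β → IsPosRoot e γ →
      ((R β γ ∧ R γ β) ↔ (β = γ ∨ (IsImag e β ∧ IsImag e γ))))

/-- `β ≻ γ`. -/
def StrictR (e : ℕ) (R : (ZMod e → ℤ) → (ZMod e → ℤ) → Prop)
    (β γ : ZMod e → ℤ) : Prop := R β γ ∧ ¬ R γ β

/-- `θ` is a sum of positive roots strictly smaller than `β`. -/
def SumRootsLt (e : ℕ) (R : (ZMod e → ℤ) → (ZMod e → ℤ) → Prop)
    (β θ : ZMod e → ℤ) : Prop :=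
  ∃ k : ℕ, ∃ γ : Fin k → (ZMod e → ℤ),
    (∀ i, IsPosRoot e (γ i) ∧ StrictR e R β (γ i)) ∧ θ = ∑ i, γ i

/-- `θ` is a sum of positive roots strictly greater than `β`. -/
def SumRootsGt (e : ℕ) (R : (ZMod e → ℤ) → (ZMod e → ℤ) → Prop)
    (β θ : ZMod e → ℤ) : Prop :=
  ∃ k : ℕ, ∃ γ : Fin k → (ZMod e → ℤ),
    (∀ i, IsPosRoot e (γ i) ∧ StrictR e R (γ i) β) ∧ θ = ∑ i, γ i

/-- A two-tile tableau `(λ1, λ2)` for `τ`. -/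
def IsTableau2 (τ lam1 lam2 : Finset Node) : Prop :=
  IsSkew lam1 ∧ IsSkew lam2 ∧ Disjoint lam1 lam2 ∧ lam1 ∪ lam2 = τ ∧
  ∀ u ∈ lam2, ∀ v ∈ lam1, ¬ SE u v

/-- A cuspidal skew shape (with respect to the preorder `R`). -/
def IsCuspidal (e : ℕ) (R : (ZMod e → ℤ) → (ZMod e → ℤ) → Prop)
    (τ : Finset Node) : Prop :=
  IsPosRoot e (cont e τ) ∧
  ∀ lam1 lam2 : Finset Node, IsTableau2 τ lam1 lam2 →
    SumRootsLt e R (cont e τ) (cont e lam1) ∧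
    SumRootsGt e R (cont e τ) (cont e lam2)

/-- An SE-removable ribbon in `τ`. -/
def SERemRibbon (τ ξ : Finset Node) : Prop := IsRibbon ξ ∧ SERemovable τ ξ

/-- A minimal SE-removable ribbon in `τ`. -/
def MinSERem (e : ℕ) (R : (ZMod e → ℤ) → (ZMod e → ℤ) → Prop)
    (τ ξ : Finset Node) : Prop :=
  SERemRibbon τ ξ ∧ ∀ ν, SERemRibbon τ ν → R (cont e ν) (cont e ξ)

/-!
Write positive roots as cyclic intervals `α(t,h)`, i.e. as pairs `(t, h)`. The heart of the
proof is that a nonempty sum of roots all strictly below `γ` is never `m • γ`. Two summands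
that concatenate to a root can be merged, and by convexity the merged root is still strictly
below `γ`; so one may assume that no two summands concatenate. Then no summand starts where
another one ends, and comparing the jumps `f v - f (v - 1)` of both sides (`α(t,h)` jumps by
`+1` at `t` and by `-1` at `t + h`) shows: for imaginary `γ` there are no summands at all, and
for real `γ` every summand is `γ + qδ` or `γ - qδ`, with both kinds occurring. Convexity then
gives `q'δ ≽ γ ≽ qδ`, so the real root `γ` is equivalent to an imaginary one, which is absurd.

Summands merely equivalent to `γ` are multiples of `γ` (or of `δ`) and can be split off; this
gives `β₁ ≽ γ` and its strict form, and the reversed preorder gives the bounds for `β_k`.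
-/

section Roots

variable {e : ℕ}

theorem alphaR_succ (t : ZMod e) (h : ℕ) :
    alphaR e t (h + 1) = alphaR e t h + Pi.single (t + h) 1 := by
  funext i
  simp only [alphaR, Finset.range_add_one, Finset.filter_insert, Pi.add_apply, Pi.single_apply,
    eq_comm (a := i)]
  split_ifs
  · rw [Finset.card_insert_of_notMem (by simp)]; push_cast; ring
  · simp

theorem alphaR_add (t : ZMod e) (h h' : ℕ) :
    alphaR e t (h + h') = alphaR e t h + alphaR e (t + h) h' := by
  induction h' with
  | zero => funext i; simp [alphaR]
  | succ n ih =>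
    rw [← add_assoc, alphaR_succ, ih, alphaR_succ, add_assoc]
    push_cast
    ring_nf

theorem alphaR_sub_alphaR_sub_one (t : ZMod e) (h : ℕ) (v : ZMod e) :
    alphaR e t h v - alphaR e t h (v - 1)
      = (if v = t then 1 else 0) - (if v = t + h then 1 else 0) := by
  induction h with
  | zero => simp [alphaR]
  | succ n ih =>
    simp only [alphaR_succ, Pi.add_apply, Pi.single_apply, sub_eq_iff_eq_add, Nat.cast_succ,
      ← add_assoc]
    grind

theorem alphaR_nonneg (t : ZMod e) (h : ℕ) : 0 ≤ alphaR e t h :=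
  fun _ => Int.natCast_nonneg _

theorem alphaR_pos (t : ZMod e) {h : ℕ} (hh : 1 ≤ h) : 0 < alphaR e t h := by
  refine lt_of_le_of_ne (alphaR_nonneg t h) fun h0 => ?_
  have : alphaR e t h t = 0 := by rw [← h0]; rfl
  simp only [alphaR, Nat.cast_eq_zero, Finset.card_eq_zero, Finset.filter_eq_empty_iff,
    Finset.mem_range] at this
  exact this (x := 0) (by omega) (by simp)

theorem isPosRoot_alphaR (t : ZMod e) {h : ℕ} (hh : 1 ≤ h) :
    IsPosRoot e (alphaR e t h) :=
  ⟨t, h, hh, rfl⟩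

theorem IsPosRoot.nonneg {β : ZMod e → ℤ} (hβ : IsPosRoot e β) : 0 ≤ β := by
  obtain ⟨t, h, -, rfl⟩ := hβ
  exact alphaR_nonneg t h

variable [NeZero e]

theorem alphaR_self (t : ZMod e) : alphaR e t e = 1 := by
  funext i
  have : ((range e).filter fun j : ℕ => t + (j : ZMod e) = i) = {(i - t).val} := by
    ext j
    simp only [Finset.mem_filter, Finset.mem_range, Finset.mem_singleton]
    constructor
    · rintro ⟨hj, rfl⟩
      simp [ZMod.val_cast_of_lt hj]
    · rintro rfl
      simp [ZMod.val_lt]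
  simp [alphaR, this]

theorem alphaR_mul (t : ZMod e) (q : ℕ) : alphaR e t (q * e) = fun _ => (q : ℤ) := by
  induction q generalizing t with
  | zero => funext i; simp [alphaR]
  | succ n ih =>
    funext i
    rw [add_one_mul, alphaR_add, ih, alphaR_self]
    simp

theorem alphaR_of_dvd (t : ZMod e) {h : ℕ} (hd : e ∣ h) :
    alphaR e t h = fun _ => ((h / e : ℕ) : ℤ) := by
  rw [← alphaR_mul t, Nat.div_mul_cancel hd]

theorem sum_alphaR (t : ZMod e) (h : ℕ) : ∑ v, alphaR e t h v = h := by
  induction h with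
  | zero => simp [alphaR]
  | succ n ih => simp [alphaR_succ, Finset.sum_add_distrib, ih]

theorem isImag_alphaR_iff (t : ZMod e) {h : ℕ} (hh : 1 ≤ h) :
    IsImag e (alphaR e t h) ↔ e ∣ h := by
  refine ⟨fun ⟨m, _, hm⟩ => ?_, fun hd => ⟨h / e, ?_, alphaR_of_dvd t hd⟩⟩
  · have := alphaR_sub_alphaR_sub_one t h t
    rw [hm, sub_self, if_pos rfl] at this
    rw [← ZMod.natCast_eq_zero_iff]
    by_contra hne
    rw [if_neg (by simpa [eq_comm] using hne)] at this
    simp at this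
  · exact (Nat.one_le_div_iff (NeZero.pos e)).mpr (Nat.le_of_dvd (by omega) hd)

theorem alphaR_add_alphaR {t t' : ZMod e} {h h' : ℕ} (hc : t' = t + h ∨ e ∣ h') :
    alphaR e t h + alphaR e t' h' = alphaR e t (h + h') := by
  rw [alphaR_add]
  rcases hc with rfl | hd
  · rfl
  · rw [alphaR_of_dvd t' hd, alphaR_of_dvd _ hd]

end Roots

section Counting

variable {e : ℕ} (s : Multiset (ZMod e × ℕ))

theorem multiset_sum_alphaR_sub_sub_one (v : ZMod e) :
    (s.map (Function.uncurry (alphaR e))).sum v - (s.map (Function.uncurry (alphaR e))).sum (v - 1)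
      = (s.countP (·.1 = v) : ℤ) - s.countP (fun p => p.1 + p.2 = v) := by
  induction s using Multiset.induction with
  | empty => simp
  | cons p s ih =>
    obtain ⟨t, h⟩ := p
    have := alphaR_sub_alphaR_sub_one t h v
    simp only [Multiset.map_cons, Multiset.sum_cons, Pi.add_apply, Multiset.countP_cons,
      Function.uncurry_apply_pair, eq_comm (a := v)] at this ⊢
    push_cast
    linarith

theorem countP_fst_eq_zero_or_countP_end_eq_zero (hreal : ∀ p ∈ s, ¬ e ∣ p.2)
    (hsep : ∀ p q t, s = p ::ₘ q ::ₘ t → q.1 ≠ p.1 + p.2) (v : ZMod e) :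
    s.countP (·.1 = v) = 0 ∨ s.countP (fun p => p.1 + p.2 = v) = 0 := by
  by_contra! h
  obtain ⟨q, hq, rfl⟩ := Multiset.countP_pos.mp (Nat.pos_of_ne_zero h.1)
  obtain ⟨p, hp, hpq⟩ := Multiset.countP_pos.mp (Nat.pos_of_ne_zero h.2)
  have hne : q ≠ p := by
    rintro rfl
    exact hreal q hq ((ZMod.natCast_eq_zero_iff _ _).mp (by simpa using hpq))
  obtain ⟨t, ht⟩ := Multiset.exists_cons_of_mem (Multiset.mem_erase_of_ne hne |>.mpr hq)
  exact hsep p q t (by rw [← ht, Multiset.cons_erase hp]) hpq.symm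

theorem multiset_sum_alphaR_pos (hs : s ≠ 0)
    (hh : ∀ p ∈ s, 1 ≤ p.2) : 0 < (s.map (Function.uncurry (alphaR e))).sum := by
  obtain ⟨p, hp⟩ := Multiset.exists_mem_of_ne_zero hs
  refine (alphaR_pos p.1 (hh p hp)).trans_le (Multiset.single_le_sum ?_ _ ?_)
  · simp only [Multiset.mem_map]
    rintro _ ⟨q, -, rfl⟩
    exact alphaR_nonneg q.1 q.2
  · exact Multiset.mem_map_of_mem _ hp

variable [NeZero e]

theorem sum_sum_alphaR :
    ∑ v, (s.map (Function.uncurry (alphaR e))).sum v = (((s.map (·.2)).sum : ℕ) : ℤ) := by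
  induction s using Multiset.induction with
  | empty => simp
  | cons p s ih =>
    obtain ⟨t, h⟩ := p
    simp [Finset.sum_add_distrib, ih, sum_alphaR]

end Counting

section NoConcatenation

variable {e : ℕ} {s : Multiset (ZMod e × ℕ)} {t₀ : ZMod e} {h₀ m : ℕ}

theorem countP_fst_sub_countP_end_of_sum_eq
    (hsum : (s.map (Function.uncurry (alphaR e))).sum = m • alphaR e t₀ h₀) (v : ZMod e) :
    (s.countP (·.1 = v) : ℤ) - s.countP (fun p => p.1 + p.2 = v)
      = m * ((if v = t₀ then 1 else 0) - (if v = t₀ + h₀ then 1 else 0)) := by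
  rw [← multiset_sum_alphaR_sub_sub_one, hsum, ← alphaR_sub_alphaR_sub_one, Pi.smul_apply,
    Pi.smul_apply, nsmul_eq_mul, nsmul_eq_mul, mul_sub]

theorem not_dvd_of_sum_eq_nsmul (hsep : ∀ p q t, s = p ::ₘ q ::ₘ t → ¬ e ∣ q.2)
    (hsum : (s.map (Function.uncurry (alphaR e))).sum = m • alphaR e t₀ h₀) (hd : ¬ e ∣ h₀)
    (hm : 1 ≤ m) : ∀ p ∈ s, ¬ e ∣ p.2 := by
  intro p hp hdp
  by_cases hsingle : s.erase p = 0
  · have hjump := countP_fst_sub_countP_end_of_sum_eq hsum t₀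
    rw [← Multiset.cons_erase hp, hsingle] at hjump
    have : ((p.2 : ℕ) : ZMod e) = 0 := (ZMod.natCast_eq_zero_iff _ _).mpr hdp
    have hγ : t₀ ≠ t₀ + h₀ := by simpa [eq_comm, ZMod.natCast_eq_zero_iff] using hd
    simp only [Multiset.countP_cons, Multiset.countP_zero, this, add_zero, if_neg hγ] at hjump
    split_ifs at hjump <;> omega
  · obtain ⟨q, hq⟩ := Multiset.exists_mem_of_ne_zero hsingle
    obtain ⟨t, ht⟩ := Multiset.exists_cons_of_mem hq
    exact hsep q p t (by rw [Multiset.cons_swap, ← ht, Multiset.cons_erase hp]) hdp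

variable (hreal : ∀ p ∈ s, ¬ e ∣ p.2) (hsep : ∀ p q t, s = p ::ₘ q ::ₘ t → q.1 ≠ p.1 + p.2)
  (hsum : (s.map (Function.uncurry (alphaR e))).sum = m • alphaR e t₀ h₀)
include hreal hsep hsum

theorem eq_zero_of_sum_eq_nsmul_of_dvd (hd : e ∣ h₀) : s = 0 := by
  refine Multiset.eq_zero_of_forall_notMem fun p hp => ?_
  have hjump := countP_fst_sub_countP_end_of_sum_eq hsum p.1
  have hpos : 0 < s.countP (·.1 = p.1) := Multiset.countP_pos.mpr ⟨p, hp, rfl⟩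
  rw [(ZMod.natCast_eq_zero_iff _ _).mpr hd, add_zero, sub_self, mul_zero] at hjump
  rcases countP_fst_eq_zero_or_countP_end_eq_zero s hreal hsep p.1 with h | h <;> omega

theorem fst_eq_and_card_eq_of_sum_eq_nsmul (hd : ¬ e ∣ h₀) :
    (∀ p ∈ s, p.1 = t₀ ∧ (p.2 : ZMod e) = h₀) ∧ Multiset.card s = m := by
  have hjump := countP_fst_sub_countP_end_of_sum_eq hsum
  have hdisj := countP_fst_eq_zero_or_countP_end_eq_zero s hreal hsep
  have hγ : t₀ + h₀ ≠ t₀ := by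
    simpa [ZMod.natCast_eq_zero_iff] using hd
  have hfst : ∀ p ∈ s, p.1 = t₀ := by
    intro p hp
    have hpos : 0 < s.countP (·.1 = p.1) := Multiset.countP_pos.mpr ⟨p, hp, rfl⟩
    have := hjump p.1
    rcases hdisj p.1 with h | h
    · omega
    · split_ifs at this <;> first | assumption | omega
  refine ⟨fun p hp => ⟨hfst p hp, ?_⟩, ?_⟩
  · have hend : p.1 + p.2 = t₀ + h₀ := by
      have hpos : 0 < s.countP (fun q => q.1 + q.2 = p.1 + p.2) :=
        Multiset.countP_pos.mpr ⟨p, hp, rfl⟩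
      have := hjump (p.1 + p.2)
      rcases hdisj (p.1 + p.2) with h | h
      · split_ifs at this <;> first | assumption | omega
      · omega
    rw [hfst p hp] at hend
    exact add_left_cancel hend
  · have hcard := Multiset.countP_eq_card.mpr hfst
    have := hjump t₀
    rw [if_pos rfl, if_neg hγ.symm] at this
    rcases hdisj t₀ with h | h <;> omega

end NoConcatenation

theorem Multiset.exists_lt_and_exists_gt_of_sum_eq {ι : Type*} {s : Multiset ι} {f : ι → ℕ}
    {a : ℕ} (hs : s ≠ 0) (hsum : (s.map f).sum = Multiset.card s * a) (hne : ∀ x ∈ s, f x ≠ a) :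
    (∃ x ∈ s, f x < a) ∧ ∃ x ∈ s, a < f x := by
  have hconst : (s.map fun _ => a).sum = Multiset.card s * a := by simp
  constructor <;> by_contra! h
  · have := Multiset.sum_lt_sum_of_nonempty hs fun x hx => (h x hx).lt_of_ne' (hne x hx)
    omega
  · have := Multiset.sum_lt_sum_of_nonempty hs fun x hx => (h x hx).lt_of_ne (hne x hx)
    omega

namespace ConvexPreorder

section Basic

variable {e : ℕ} {R : (ZMod e → ℤ) → (ZMod e → ℤ) → Prop} (hR : ConvexPreorder e R)
  {β γ ν : ZMod e → ℤ}
include hR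

theorem refl (hβ : IsPosRoot e β) : R β β := hR.1 β hβ

theorem trans (hβ : IsPosRoot e β) (hγ : IsPosRoot e γ) (hν : IsPosRoot e ν) :
    R β γ → R γ ν → R β ν :=
  hR.2.1 β γ ν hβ hγ hν

theorem total (hβ : IsPosRoot e β) (hγ : IsPosRoot e γ) : R β γ ∨ R γ β := hR.2.2.1 β γ hβ hγ

theorem add_between (hβ : IsPosRoot e β) (hγ : IsPosRoot e γ) (hβγ : IsPosRoot e (β + γ)) :
    R β (β + γ) ∧ R (β + γ) γ ∨ R γ (β + γ) ∧ R (β + γ) β := by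
  rcases hR.total hβ hγ with h | h
  · exact .inl (hR.2.2.2.1 β γ hβ hγ h hβγ)
  · rw [add_comm] at hβγ ⊢
    exact .inr (hR.2.2.2.1 γ β hγ hβ h hβγ)

theorem equiv_iff (hβ : IsPosRoot e β) (hγ : IsPosRoot e γ) :
    R β γ ∧ R γ β ↔ β = γ ∨ IsImag e β ∧ IsImag e γ :=
  hR.2.2.2.2 β γ hβ hγ

theorem le_of_isImag (hβ : IsPosRoot e β) (hγ : IsPosRoot e γ) (hβi : IsImag e β)
    (hγi : IsImag e γ) : R β γ :=
  ((hR.equiv_iff hβ hγ).mpr (.inr ⟨hβi, hγi⟩)).1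

theorem strictR_of_le_of_strictR (hβ : IsPosRoot e β) (hγ : IsPosRoot e γ)
    (hν : IsPosRoot e ν) (h₁ : R β γ) (h₂ : StrictR e R γ ν) : StrictR e R β ν :=
  ⟨hR.trans hβ hγ hν h₁ h₂.1, fun h => h₂.2 (hR.trans hν hβ hγ h h₁)⟩

theorem strictR_add (hβ : IsPosRoot e β) (hγ : IsPosRoot e γ) (hν : IsPosRoot e ν)
    (hβγ : IsPosRoot e (β + γ)) (h₁ : StrictR e R ν β) (h₂ : StrictR e R ν γ) :
    StrictR e R ν (β + γ) := by
  rcases hR.add_between hβ hγ hβγ with ⟨h, -⟩ | ⟨h, -⟩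
  · exact ⟨hR.trans hν hβ hβγ h₁.1 h, fun h' => h₁.2 (hR.trans hβ hβγ hν h h')⟩
  · exact ⟨hR.trans hν hγ hβγ h₂.1 h, fun h' => h₂.2 (hR.trans hγ hβγ hν h h')⟩

theorem le_of_strictR_add (hγ : IsPosRoot e γ) (hν : IsPosRoot e ν)
    (hγν : IsPosRoot e (γ + ν)) (h : StrictR e R γ (γ + ν)) : R γ ν := by
  rcases hR.add_between hγ hν hγν with ⟨-, h'⟩ | ⟨h', h''⟩
  · exact hR.trans hγ hγν hν h.1 h'
  · exact absurd h'' h.2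

theorem le_add_of_add_strictR (hβ : IsPosRoot e β) (hν : IsPosRoot e ν)
    (hβν : IsPosRoot e (β + ν)) (h : StrictR e R (β + ν) β) : R ν (β + ν) := by
  rcases hR.add_between hβ hν hβν with ⟨h', -⟩ | ⟨h', -⟩
  · exact absurd h' h.2
  · exact h'

theorem flip : ConvexPreorder e (flip R) := by
  refine ⟨fun β hβ => hR.refl hβ, fun β γ ν hβ hγ hν h₁ h₂ => hR.trans hν hγ hβ h₂ h₁,
    fun β γ hβ hγ => (hR.total hβ hγ).symm, fun β γ hβ hγ h hβγ => ?_,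
    fun β γ hβ hγ => ?_⟩
  · rw [add_comm] at hβγ ⊢
    exact (hR.2.2.2.1 γ β hγ hβ h hβγ).symm
  · show R γ β ∧ R β γ ↔ _
    rw [hR.equiv_iff hγ hβ, eq_comm, and_comm (a := IsImag e γ)]

end Basic

section Positive

variable {e : ℕ} [NeZero e] {R : (ZMod e → ℤ) → (ZMod e → ℤ) → Prop} (hR : ConvexPreorder e R)
  {γ : ZMod e → ℤ}
include hR

theorem false_of_strictR_alphaR_of_modEq {t : ZMod e}
    {h h₁ h₂ : ℕ} (hh : ¬ e ∣ h) (hh₁ : 1 ≤ h₁) (h₁h : h₁ < h) (hh₂ : h < h₂)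
    (hc₁ : (h₁ : ZMod e) = h) (hc₂ : (h₂ : ZMod e) = h)
    (hs₁ : StrictR e R (alphaR e t h) (alphaR e t h₁))
    (hs₂ : StrictR e R (alphaR e t h) (alphaR e t h₂)) : False := by
  have hd₁ : e ∣ h - h₁ := (Nat.modEq_iff_dvd' h₁h.le).mp ((ZMod.natCast_eq_natCast_iff ..).mp hc₁)
  have hd₂ : e ∣ h₂ - h :=
    (Nat.modEq_iff_dvd' hh₂.le).mp ((ZMod.natCast_eq_natCast_iff ..).mp hc₂.symm)
  set δ₁ := alphaR e (t + h₁) (h - h₁)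
  set δ₂ := alphaR e (t + h) (h₂ - h)
  have hγ : IsPosRoot e (alphaR e t h) := isPosRoot_alphaR t (by omega)
  have hδ₁ : IsPosRoot e δ₁ := isPosRoot_alphaR _ (by omega)
  have hδ₂ : IsPosRoot e δ₂ := isPosRoot_alphaR _ (by omega)
  have hsplit₁ : alphaR e t h = alphaR e t h₁ + δ₁ := by
    rw [← alphaR_add, Nat.add_sub_cancel' h₁h.le]
  have hsplit₂ : alphaR e t h₂ = alphaR e t h + δ₂ := by
    rw [← alphaR_add, Nat.add_sub_cancel' hh₂.le]
  have hγδ₂ : R (alphaR e t h) δ₂ :=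
    hR.le_of_strictR_add hγ hδ₂ (hsplit₂ ▸ isPosRoot_alphaR t (by omega)) (hsplit₂ ▸ hs₂)
  have hδ₁γ : R δ₁ (alphaR e t h) := by
    rw [hsplit₁] at hs₁ hγ ⊢
    exact hR.le_add_of_add_strictR (isPosRoot_alphaR t hh₁) hδ₁ hγ hs₁
  have hδ₂δ₁ : R δ₂ δ₁ := hR.le_of_isImag hδ₂ hδ₁
    ((isImag_alphaR_iff _ (by omega)).mpr hd₂) ((isImag_alphaR_iff _ (by omega)).mpr hd₁)
  have hγδ₁ := hR.trans hγ hδ₂ hδ₁ hγδ₂ hδ₂δ₁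
  apply hh
  rw [← isImag_alphaR_iff t (by omega)]
  rcases (hR.equiv_iff hγ hδ₁).mp ⟨hγδ₁, hδ₁γ⟩ with heq | ⟨himag, -⟩
  · rw [heq]
    exact (isImag_alphaR_iff _ (by omega)).mpr hd₁
  · exact himag

theorem sum_ne_nsmul_of_not_concat {s : Multiset (ZMod e × ℕ)} (hs : s ≠ 0) {t₀ : ZMod e}
    {h₀ : ℕ} (hh₀ : 1 ≤ h₀)
    (hlt : ∀ p ∈ s, 1 ≤ p.2 ∧ StrictR e R (alphaR e t₀ h₀) (Function.uncurry (alphaR e) p))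
    (hnc : ∀ p q t, s = p ::ₘ q ::ₘ t →
      Function.uncurry (alphaR e) p + Function.uncurry (alphaR e) q ≠ alphaR e p.1 (p.2 + q.2))
    {m : ℕ} (hm : 1 ≤ m) :
    (s.map (Function.uncurry (alphaR e))).sum ≠ m • alphaR e t₀ h₀ := by
  intro hsum
  have hsep : ∀ p q t, s = p ::ₘ q ::ₘ t → q.1 ≠ p.1 + p.2 ∧ ¬ e ∣ q.2 := fun p q t hs =>
    ⟨fun h => hnc p q t hs (alphaR_add_alphaR (.inl h)),
      fun h => hnc p q t hs (alphaR_add_alphaR (.inr h))⟩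
  have hγ := isPosRoot_alphaR t₀ hh₀
  by_cases hd : e ∣ h₀
  · have hreal : ∀ p ∈ s, ¬ e ∣ p.2 := fun p hp hdp =>
      (hlt p hp).2.2 <| hR.le_of_isImag (isPosRoot_alphaR _ (hlt p hp).1) hγ
        ((isImag_alphaR_iff _ (hlt p hp).1).mpr hdp) ((isImag_alphaR_iff _ hh₀).mpr hd)
    exact hs (eq_zero_of_sum_eq_nsmul_of_dvd hreal (fun p q t h => (hsep p q t h).1) hsum hd)
  have hreal := not_dvd_of_sum_eq_nsmul (fun p q t h => (hsep p q t h).2) hsum hd hm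
  obtain ⟨hform, hcard⟩ :=
    fst_eq_and_card_eq_of_sum_eq_nsmul hreal (fun p q t h => (hsep p q t h).1) hsum hd
  have hheight : (s.map (·.2)).sum = Multiset.card s * h₀ := by
    have := sum_sum_alphaR s
    rw [hsum] at this
    simp only [Pi.smul_apply, nsmul_eq_mul, ← Finset.mul_sum, sum_alphaR] at this
    rw [hcard]
    exact_mod_cast this.symm
  have hne : ∀ p ∈ s, p.2 ≠ h₀ := by
    intro p hp hp₂
    have := (hlt p hp).2
    simp only [Function.uncurry_def, (hform p hp).1, hp₂] at this
    exact this.2 this.1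
  obtain ⟨⟨q, hq, hq₂⟩, ⟨p, hp, hp₂⟩⟩ := Multiset.exists_lt_and_exists_gt_of_sum_eq hs hheight hne
  have hlt' : ∀ r ∈ s, StrictR e R (alphaR e t₀ h₀) (alphaR e t₀ r.2) := fun r hr =>
    (hform r hr).1 ▸ (hlt r hr).2
  exact hR.false_of_strictR_alphaR_of_modEq hd (hlt q hq).1 hq₂ hp₂ (hform q hq).2
    (hform p hp).2 (hlt' q hq) (hlt' p hp)

theorem sum_ne_nsmul_of_forall_strictR (hγ : IsPosRoot e γ)
    {s : Multiset (ZMod e × ℕ)} (hs : s ≠ 0)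
    (hlt : ∀ p ∈ s, 1 ≤ p.2 ∧ StrictR e R γ (Function.uncurry (alphaR e) p))
    {m : ℕ} (hm : 1 ≤ m) : (s.map (Function.uncurry (alphaR e))).sum ≠ m • γ := by
  obtain ⟨t₀, h₀, hh₀, rfl⟩ := hγ
  induction hn : Multiset.card s using Nat.strong_induction_on generalizing s with
  | _ n ih =>
  by_cases hc : ∃ p q t, s = p ::ₘ q ::ₘ t ∧
      Function.uncurry (alphaR e) p + Function.uncurry (alphaR e) q = alphaR e p.1 (p.2 + q.2)
  · obtain ⟨p, q, t, rfl, hpq⟩ := hc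
    have hp := hlt p (by simp)
    have hq := hlt q (by simp)
    have hmerge : ((p ::ₘ q ::ₘ t).map (Function.uncurry (alphaR e))).sum
        = (((p.1, p.2 + q.2) ::ₘ t).map (Function.uncurry (alphaR e))).sum := by
      simp [← hpq, add_assoc]
    rw [hmerge]
    refine ih _ (by simp [← hn]) (by simp) (fun r hr => ?_) rfl
    rcases Multiset.mem_cons.mp hr with rfl | hr
    · refine ⟨by omega, ?_⟩
      rw [Function.uncurry_apply_pair, ← hpq]
      exact hR.strictR_add (isPosRoot_alphaR _ hp.1) (isPosRoot_alphaR _ hq.1)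
        (isPosRoot_alphaR t₀ hh₀) (hpq ▸ isPosRoot_alphaR _ (by omega)) hp.2 hq.2
    · exact hlt r (by simp [hr])
  · push Not at hc
    exact hR.sum_ne_nsmul_of_not_concat hs hh₀ hlt hc hm

theorem exists_forall_equiv_mem_multiples (hγ : IsPosRoot e γ) :
    ∃ ρ, IsPosRoot e ρ ∧ R ρ γ ∧
      ∀ β, IsPosRoot e β → R β γ → R γ β → β ∈ AddSubmonoid.multiples ρ := by
  by_cases hi : IsImag e γ
  · have hδ : IsPosRoot e (alphaR e 0 e) := isPosRoot_alphaR 0 (NeZero.one_le)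
    refine ⟨alphaR e 0 e, hδ,
      hR.le_of_isImag hδ hγ ((isImag_alphaR_iff 0 NeZero.one_le).mpr dvd_rfl) hi,
      fun β hβ h₁ h₂ => ?_⟩
    have hβi : IsImag e β := by
      rcases (hR.equiv_iff hβ hγ).mp ⟨h₁, h₂⟩ with rfl | ⟨hβi, -⟩
      exacts [hi, hβi]
    obtain ⟨c, -, rfl⟩ := hβi
    exact (AddSubmonoid.mem_multiples_iff _ _).mpr ⟨c, by ext; simp [alphaR_self]⟩
  · refine ⟨γ, hγ, hR.refl hγ, fun β hβ h₁ h₂ => ?_⟩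
    rcases (hR.equiv_iff hβ hγ).mp ⟨h₁, h₂⟩ with rfl | ⟨-, hi'⟩
    exacts [AddSubmonoid.mem_multiples β, absurd hi' hi]

theorem sum_ne_nsmul_of_forall_le (hγ : IsPosRoot e γ) {s : Multiset (ZMod e × ℕ)}
    (hle : ∀ p ∈ s, 1 ≤ p.2 ∧ R γ (Function.uncurry (alphaR e) p))
    (hlt : ∃ p ∈ s, ¬ R (Function.uncurry (alphaR e) p) γ) (m : ℕ) :
    (s.map (Function.uncurry (alphaR e))).sum ≠ m • γ := by
  classical
  intro hsum
  obtain ⟨ρ, hρ, hργ, hmult⟩ := hR.exists_forall_equiv_mem_multiples hγ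
  set s₁ := s.filter fun p => ¬ R (Function.uncurry (alphaR e) p) γ
  set s₂ := s.filter fun p => R (Function.uncurry (alphaR e) p) γ
  have hs₁ : s₁ ≠ 0 := by
    obtain ⟨p, hp, hpγ⟩ := hlt
    exact Multiset.card_pos.mp <| Multiset.card_pos_iff_exists_mem.mpr
      ⟨p, Multiset.mem_filter.mpr ⟨hp, hpγ⟩⟩
  have hle₁ : ∀ p ∈ s₁, 1 ≤ p.2 := fun p hp => (hle p (Multiset.mem_of_mem_filter hp)).1
  obtain ⟨N, hN⟩ := (AddSubmonoid.mem_multiples_iff _ _).mp <|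
    AddSubmonoid.multiset_sum_mem _ (s₂.map (Function.uncurry (alphaR e))) <| by
      simp only [Multiset.mem_map, Multiset.mem_filter, s₂]
      rintro _ ⟨p, ⟨hp, hpγ⟩, rfl⟩
      exact hmult _ (isPosRoot_alphaR _ (hle p hp).1) hpγ (hle p hp).2
  obtain ⟨n, hn⟩ := (AddSubmonoid.mem_multiples_iff _ _).mp <|
    hmult γ hγ (hR.refl hγ) (hR.refl hγ)
  have hsplit : (s₁.map (Function.uncurry (alphaR e))).sum + N • ρ = (m * n) • ρ := by
    rw [mul_nsmul', hn, ← hsum, hN, ← Multiset.sum_add, ← Multiset.map_add, add_comm s₁,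
      Multiset.filter_add_not]
  have hpos := multiset_sum_alphaR_pos s₁ hs₁ hle₁
  obtain ⟨M, hM, hMN⟩ : ∃ M, 1 ≤ M ∧ m * n = N + M := by
    have hNmn : N < m * n := by
      by_contra! h
      have := nsmul_le_nsmul_left hρ.nonneg h
      rw [← hsplit] at this
      exact (lt_add_of_pos_left _ hpos).not_ge this
    exact ⟨m * n - N, by omega, by omega⟩
  rw [hMN, add_nsmul, add_comm] at hsplit
  refine hR.sum_ne_nsmul_of_forall_strictR hρ hs₁ (fun p hp => ⟨hle₁ p hp, ?_⟩) hM
    (add_left_cancel hsplit)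
  obtain ⟨hp, hpγ⟩ := Multiset.mem_filter.mp hp
  exact hR.strictR_of_le_of_strictR hρ hγ (isPosRoot_alphaR _ (hle p hp).1) hργ
    ⟨(hle p hp).2, hpγ⟩

theorem forall_le_of_le_head (hγ : IsPosRoot e γ) {k m : ℕ} {β : Fin (k + 1) → ZMod e → ℤ}
    (hβ : ∀ i, IsPosRoot e (β i)) (hsum : ∑ i, β i = m • γ)
    (hchain : ∀ i j : Fin (k + 1), i ≤ j → R (β i) (β j)) (h₀ : R γ (β 0)) :
    ∀ i, R (β i) γ := by
  by_contra! ⟨i, hi⟩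
  choose t h hh hβeq using hβ
  obtain rfl : β = fun i => alphaR e (t i) (h i) := funext hβeq
  refine hR.sum_ne_nsmul_of_forall_le hγ (s := Finset.univ.val.map fun i => (t i, h i)) ?_
    ⟨(t i, h i), Multiset.mem_map_of_mem _ (Finset.mem_univ i), hi⟩ m ?_
  · simp only [Multiset.mem_map, Finset.mem_val, Finset.mem_univ, true_and]
    rintro _ ⟨j, rfl⟩
    exact ⟨hh j, hR.trans hγ (isPosRoot_alphaR _ (hh 0)) (isPosRoot_alphaR _ (hh j)) h₀
      (hchain 0 j (Fin.zero_le j))⟩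
  · rw [← hsum, Multiset.map_map]
    rfl

theorem head_le_of_chain (hγ : IsPosRoot e γ) {k m : ℕ} {β : Fin (k + 1) → ZMod e → ℤ}
    (hβ : ∀ i, IsPosRoot e (β i)) (hsum : ∑ i, β i = m • γ)
    (hchain : ∀ i j : Fin (k + 1), i ≤ j → R (β i) (β j)) :
    R (β 0) γ ∧ (StrictR e R (β 0) (β (Fin.last k)) → StrictR e R (β 0) γ) := by
  have hle : R (β 0) γ := by
    by_contra h
    exact h (hR.forall_le_of_le_head hγ hβ hsum hchain ((hR.total hγ (hβ 0)).resolve_right h) 0)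
  refine ⟨hle, fun hs => ⟨hle, fun h => hs.2 ?_⟩⟩
  exact hR.trans (hβ _) hγ (hβ 0) (hR.forall_le_of_le_head hγ hβ hsum hchain h _) h

end Positive

end ConvexPreorder

theorem stmt11_general (e : ℕ) (he : 1 < e)
    (R : (ZMod e → ℤ) → (ZMod e → ℤ) → Prop) (hR : ConvexPreorder e R)
    (k m : ℕ) (γ : ZMod e → ℤ) (hγ : IsPosRoot e γ)
    (β : Fin (k + 1) → (ZMod e → ℤ)) (hβ : ∀ i, IsPosRoot e (β i))
    (hsum : ∑ i, β i = m • γ)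
    (hchain : ∀ i j : Fin (k + 1), i ≤ j → R (β i) (β j)) :
    (R (β 0) γ ∧ R γ (β (Fin.last k))) ∧
    (StrictR e R (β 0) (β (Fin.last k)) →
      StrictR e R (β 0) γ ∧ StrictR e R γ (β (Fin.last k))) := by
  have : NeZero e := ⟨by omega⟩
  obtain ⟨hfirst, hfirst'⟩ := hR.head_le_of_chain hγ hβ hsum hchain
  obtain ⟨hlast, hlast'⟩ := hR.flip.head_le_of_chain hγ (β := fun i => β i.rev) (fun i => hβ _)
    ((Equiv.sum_comp Fin.revPerm β).trans hsum) fun i j hij => hchain _ _ (Fin.rev_le_rev.mpr hij)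
  simp only [Fin.rev_zero, Fin.rev_last] at hlast hlast'
  exact ⟨⟨hfirst, hlast⟩, fun hs => ⟨hfirst' hs, hlast' hs⟩⟩

theorem stmt11 (e : ℕ) (he : 1 < e)
    (R : (ZMod e → ℤ) → (ZMod e → ℤ) → Prop) (hR : ConvexPreorder e R)
    (k m : ℕ) (hm : 1 ≤ m) (γ : ZMod e → ℤ) (hγ : IsPosRoot e γ)
    (β : Fin (k + 1) → (ZMod e → ℤ)) (hβ : ∀ i, IsPosRoot e (β i))
    (hsum : ∑ i, β i = m • γ)
    (hchain : ∀ i j : Fin (k + 1), i ≤ j → R (β i) (β j)) :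
    (R (β 0) γ ∧ R γ (β (Fin.last k))) ∧
    (StrictR e R (β 0) (β (Fin.last k)) →
      StrictR e R (β 0) γ ∧ StrictR e R γ (β (Fin.last k))) :=
  stmt11_general e he R hR k m γ hγ β hβ hsum hchain
end
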